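/- Assume A and Ω¹ are finite-dimensional over k. Let ∇̄ : T → M be a k-linear map satisfying, for all Σᵢ lᵢ⊗mᵢ ∈ T and a ∈ A: ∇̄(Σᵢ lᵢ⊗mᵢ)·a = ∇̄(Σᵢ (lᵢ·a)⊗mᵢ) + Σᵢ lᵢ(da)·mᵢ. Then ∇₀ := −∇̄∘Υ⁻¹ : Hom_A(Ω¹, M) → M is a hom-connection, i.e. ∇₀(f·a) = ∇₀(f)·a + f(da) for all right A-linear f : Ω¹ → M and a ∈ A. Together with the converse direction, the assignment ∇₀ ↦ −∇₀∘Υ is a bijective correspondence between hom-connections on M and such maps ∇̄. -/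

import Mathlib

set_option linter.unusedSectionVars false

/-!
STATEMENT 8: `A`, `Ω¹` finite-dimensional.  If a `k`-linear `∇̄ : T → M` satisfies
`∇̄(Σ lᵢ⊗mᵢ)·a = ∇̄(Σ (lᵢ·a)⊗mᵢ) + Σ lᵢ(da)·mᵢ` (a connection in the left
`C = A*`-comodule `M`), then `∇₀ := −∇̄∘Υ⁻¹` is a hom-connection, where
`Υ⁻¹(f) = Σ_t eᵗ ⊗ f(ωᵗ)` for a basis `{ωᵗ}` of `Ω¹` with dual basis `{eᵗ}`.
Together with the converse direction, `∇₀ ↦ −∇₀∘Υ` is a bijective correspondence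
between hom-connections on `M` and such maps `∇̄`.
-/

open MulOpposite TensorProduct

noncomputable section

variable {k A Ω M : Type*} [Field k] [Ring A] [Algebra k A]
  [AddCommGroup Ω] [Module k Ω] [Module A Ω] [Module Aᵐᵒᵖ Ω]
  [SMulCommClass A Aᵐᵒᵖ Ω] [SMulCommClass Aᵐᵒᵖ k Ω] [SMulCommClass A k Ω]
  [IsScalarTower k Aᵐᵒᵖ Ω]
  [AddCommGroup M] [Module k M] [Module Aᵐᵒᵖ M]
  [SMulCommClass Aᵐᵒᵖ k M] [IsScalarTower k Aᵐᵒᵖ M]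

/-- The left `A`-action on `L = Hom_k(Ω¹, k)`: `(a·l)(ω) := l(ωa)`. -/
def aL (a : A) : (Ω →ₗ[k] k) →ₗ[k] (Ω →ₗ[k] k) :=
  (DistribMulAction.toLinearMap k Ω (op a)).dualMap

/-- The right `A`-action on `L = Hom_k(Ω¹, k)`: `(l·a)(ω) := l(aω)`. -/
def raL (a : A) : (Ω →ₗ[k] k) →ₗ[k] (Ω →ₗ[k] k) :=
  (DistribMulAction.toLinearMap k Ω a).dualMap

/-- The right `A`-action on `M` as a `k`-linear endomorphism. -/
def mR (a : A) : M →ₗ[k] M := DistribMulAction.toLinearMap k M (op a)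

/-- The cotensor product `T = L □_C M ⊆ L ⊗_k M`. -/
def cotensor : Submodule k ((Ω →ₗ[k] k) ⊗[k] M) :=
  haveI : Sub ((Ω →ₗ[k] k) ⊗[k] M →ₗ[k] (Ω →ₗ[k] k) ⊗[k] M) :=
    @LinearMap.instSub k k _ _ _ _ _ TensorProduct.addCommGroup _ _ (RingHom.id k)
  ⨅ a : A, LinearMap.ker
    ((TensorProduct.map (aL (k := k) (Ω := Ω) a) (LinearMap.id : M →ₗ[k] M) -
      TensorProduct.map (LinearMap.id : (Ω →ₗ[k] k) →ₗ[k] (Ω →ₗ[k] k))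
        (mR (k := k) (M := M) a) :
      (Ω →ₗ[k] k) ⊗[k] M →ₗ[k] (Ω →ₗ[k] k) ⊗[k] M))

/-- The operation `Σ lᵢ⊗mᵢ ↦ Σ (lᵢ·a)⊗mᵢ` on `L ⊗ M`. -/
def tsm (a : A) : (Ω →ₗ[k] k) ⊗[k] M →ₗ[k] (Ω →ₗ[k] k) ⊗[k] M :=
  TensorProduct.map (raL (k := k) (Ω := Ω) a) (LinearMap.id : M →ₗ[k] M)

lemma dualTensorHom_map_aL (a : A) (t : (Ω →ₗ[k] k) ⊗[k] M) (ω : Ω) :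
    dualTensorHom k Ω M
        (TensorProduct.map (aL (k := k) (Ω := Ω) a) (LinearMap.id : M →ₗ[k] M) t) ω =
      dualTensorHom k Ω M t (op a • ω) := by
  induction t using TensorProduct.induction_on with
  | zero => simp
  | tmul l m => simp [aL, dualTensorHom_apply]; rfl
  | add x y hx hy => simp [map_add, hx, hy]

lemma dualTensorHom_map_mR (a : A) (t : (Ω →ₗ[k] k) ⊗[k] M) (ω : Ω) :
    dualTensorHom k Ω M
        (TensorProduct.map (LinearMap.id : (Ω →ₗ[k] k) →ₗ[k] (Ω →ₗ[k] k))
          (mR (k := k) (M := M) a) t) ω =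
      op a • dualTensorHom k Ω M t ω := by
  induction t using TensorProduct.induction_on with
  | zero => simp
  | tmul l m =>
      simp only [TensorProduct.map_tmul, LinearMap.id_coe, id_eq, dualTensorHom_apply, mR]
      exact smul_comm _ _ _
  | add x y hx hy => simp [map_add, hx, hy, smul_add]

/-- `Υ : T → Hom_A(Ω¹, M)`, `Υ(Σ lᵢ⊗mᵢ)(ω) = Σ lᵢ(ω)·mᵢ` (a right `A`-linear map). -/
def Upsilon (t : ↥(cotensor (k := k) (A := A) (Ω := Ω) (M := M))) : Ω →ₗ[Aᵐᵒᵖ] M where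
  toFun ω := dualTensorHom k Ω M t.1 ω
  map_add' x y := by simp
  map_smul' b ω := by
    have ht := t.2
    simp only [cotensor, Submodule.mem_iInf, LinearMap.mem_ker, LinearMap.sub_apply,
      sub_eq_zero] at ht
    have ht' : ∀ i : A,
        TensorProduct.map (aL (k := k) (Ω := Ω) i) (LinearMap.id : M →ₗ[k] M) t.1 =
          TensorProduct.map (LinearMap.id : (Ω →ₗ[k] k) →ₗ[k] (Ω →ₗ[k] k))
            (mR (k := k) (M := M) i) t.1 := fun i => sub_eq_zero.mp (ht i)
    have h := congrArg (fun s => dualTensorHom k Ω M s ω) (ht' b.unop)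
    beta_reduce at h
    rw [dualTensorHom_map_aL, dualTensorHom_map_mR, op_unop] at h
    show dualTensorHom k Ω M t.1 (b • ω) = b • dualTensorHom k Ω M t.1 ω
    exact h

/-- The right `A`-action on `Hom_A(Ω¹, M)`: `(f · a) ω := f (a • ω)`. -/
def rsmulHom (a : A) (f : Ω →ₗ[Aᵐᵒᵖ] M) : Ω →ₗ[Aᵐᵒᵖ] M where
  toFun ω := f (a • ω)
  map_add' x y := by simp [smul_add]
  map_smul' b ω := by
    haveI := SMulCommClass.symm A Aᵐᵒᵖ Ω
    show f (a • b • ω) = b • f (a • ω)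
    rw [smul_comm a b ω, map_smul]

/-- A first-order differential calculus on `A`. -/
def IsFODC (d : A →ₗ[k] Ω) : Prop :=
  ∀ a b : A, d (a * b) = a • d b + op b • d a

/-- A hom-connection. -/
def IsHomConnection (d : A →ₗ[k] Ω) (D : (Ω →ₗ[Aᵐᵒᵖ] M) → M) : Prop :=
  IsLinearMap k D ∧
    ∀ (f : Ω →ₗ[Aᵐᵒᵖ] M) (a : A), D (rsmulHom a f) = op a • D f + f (d a)

/-- A connection in the left `C = A*`-comodule `M` with respect to the coderivation
`λ = d*`, written in terms of `T`: a `k`-linear `∇̄ : T → M` with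
`∇̄(t)·a = ∇̄(t·a) + Σᵢ lᵢ(da)·mᵢ`. -/
def IsComodConn (d : A →ₗ[k] Ω)
    (Db : ↥(cotensor (k := k) (A := A) (Ω := Ω) (M := M)) →ₗ[k] M) : Prop :=
  ∀ (t t' : ↥(cotensor (k := k) (A := A) (Ω := Ω) (M := M))) (a : A),
    t'.1 = tsm (k := k) (Ω := Ω) (M := M) a t.1 →
    op a • Db t = Db t' + dualTensorHom k Ω M t.1 (d a)

/-!
Over a field, `dualTensorHom : L ⊗ M → Hom_k(Ω¹, M)` is bijective because `Ω¹` is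
finite-dimensional, and the cotensor condition on `t` says exactly that its image is right
`A`-linear; so `Υ` is a `k`-linear bijection. It turns `t ↦ Σ (lᵢ·a)⊗mᵢ` into `f ↦ f·a`, and
`Σ lᵢ(da)·mᵢ = Υ(t)(da)`, so under `∇̄ = −∇₀∘Υ` the Leibniz rule of `∇̄` is literally that of `∇₀`.
-/

section Upsilon

@[simp]
lemma Upsilon_apply (t : ↥(cotensor (k := k) (A := A) (Ω := Ω) (M := M))) (ω : Ω) :
    Upsilon t ω = dualTensorHom k Ω M t.1 ω :=
  rfl

lemma dualTensorHom_tsm (a : A) (s : (Ω →ₗ[k] k) ⊗[k] M) (ω : Ω) :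
    dualTensorHom k Ω M (tsm (k := k) (Ω := Ω) (M := M) a s) ω =
      dualTensorHom k Ω M s (a • ω) := by
  induction s using TensorProduct.induction_on with
  | zero => simp
  | tmul l m => simp [tsm, raL, dualTensorHom_apply]; rfl
  | add x y hx hy => simp only [map_add, LinearMap.add_apply, hx, hy]

lemma dualTensorHom_sum_coord_tmul {R V N ι : Type*} [CommRing R] [AddCommGroup V] [Module R V]
    [AddCommGroup N] [Module R N] [Fintype ι] (b : Module.Basis ι R V) (g : V →ₗ[R] N) :
    dualTensorHom R V N (∑ i, b.coord i ⊗ₜ[R] g (b i)) = g := by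
  ext ω
  simp only [map_sum, LinearMap.coe_sum, Finset.sum_apply, dualTensorHom_apply,
    Module.Basis.coord_apply]
  simp only [← map_smul, ← map_sum, b.sum_repr]

lemma Upsilon_eq_of_eq_sum_coord_tmul {ι : Type*} [Fintype ι] (b : Module.Basis ι k Ω)
    {f : Ω →ₗ[Aᵐᵒᵖ] M} {t : ↥(cotensor (k := k) (A := A) (Ω := Ω) (M := M))}
    (ht : t.1 = ∑ i, b.coord i ⊗ₜ[k] f (b i)) : Upsilon t = f :=
  LinearMap.ext fun ω => by
    rw [Upsilon_apply, ht]
    exact LinearMap.congr_fun (dualTensorHom_sum_coord_tmul b (f.restrictScalars k)) ω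

lemma mem_cotensor_iff {t : (Ω →ₗ[k] k) ⊗[k] M} :
    t ∈ cotensor (k := k) (A := A) (Ω := Ω) (M := M) ↔
      ∀ a : A, TensorProduct.map (aL (k := k) (Ω := Ω) a) LinearMap.id t =
        TensorProduct.map LinearMap.id (mR (k := k) (M := M) a) t := by
  simp only [cotensor, Submodule.mem_iInf, LinearMap.mem_ker]
  exact forall_congr' fun a => sub_eq_zero (a := TensorProduct.map (aL a) LinearMap.id t)

variable [FiniteDimensional k Ω]

lemma mem_cotensor_of_dualTensorHom_eq (f : Ω →ₗ[Aᵐᵒᵖ] M) {t : (Ω →ₗ[k] k) ⊗[k] M}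
    (ht : dualTensorHom k Ω M t = f.restrictScalars k) :
    t ∈ cotensor (k := k) (A := A) (Ω := Ω) (M := M) := by
  refine mem_cotensor_iff.2 fun a => dualTensorHom_bijective.injective (LinearMap.ext fun ω => ?_)
  rw [dualTensorHom_map_aL, dualTensorHom_map_mR, ht]
  exact f.map_smul (op a) ω

lemma Upsilon_injective :
    Function.Injective (Upsilon (k := k) (A := A) (Ω := Ω) (M := M)) := fun _ _ h =>
  Subtype.ext <| dualTensorHom_bijective.injective <| LinearMap.ext fun ω => LinearMap.congr_fun h ω

lemma Upsilon_surjective :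
    Function.Surjective (Upsilon (k := k) (A := A) (Ω := Ω) (M := M)) := fun f => by
  obtain ⟨t, ht⟩ := dualTensorHom_bijective.surjective (f.restrictScalars k)
  exact ⟨⟨t, mem_cotensor_of_dualTensorHom_eq f ht⟩, LinearMap.ext fun ω => by
    simp [ht]⟩

variable (k A Ω M) in
def upsilonEquiv : ↥(cotensor (k := k) (A := A) (Ω := Ω) (M := M)) ≃ₗ[k] (Ω →ₗ[Aᵐᵒᵖ] M) :=
  LinearEquiv.ofBijective
    { toFun := Upsilon
      map_add' := fun t t' => LinearMap.ext fun ω => by simp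
      map_smul' := fun c t => LinearMap.ext fun ω => by simp }
    ⟨Upsilon_injective, Upsilon_surjective⟩

@[simp]
lemma upsilonEquiv_apply (t : ↥(cotensor (k := k) (A := A) (Ω := Ω) (M := M))) :
    upsilonEquiv k A Ω M t = Upsilon t :=
  rfl

@[simp]
lemma upsilonEquiv_symm_Upsilon (t : ↥(cotensor (k := k) (A := A) (Ω := Ω) (M := M))) :
    (upsilonEquiv k A Ω M).symm (Upsilon t) = t :=
  (upsilonEquiv k A Ω M).symm_apply_apply t

lemma Upsilon_eq_rsmulHom_iff (a : A) (t t' : ↥(cotensor (k := k) (A := A) (Ω := Ω) (M := M))) :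
    Upsilon t' = rsmulHom a (Upsilon t) ↔ t'.1 = tsm (k := k) (Ω := Ω) (M := M) a t.1 := by
  refine ⟨fun h => dualTensorHom_bijective.injective (LinearMap.ext fun ω => ?_), fun h => ?_⟩
  · rw [dualTensorHom_tsm]
    exact LinearMap.congr_fun h ω
  · ext ω
    simp [h, dualTensorHom_tsm, rsmulHom]

end Upsilon

section Correspondence

variable [FiniteDimensional k Ω] (d : A →ₗ[k] Ω)

lemma isComodConn_iff_leibniz {D : (Ω →ₗ[Aᵐᵒᵖ] M) → M}
    {Db : ↥(cotensor (k := k) (A := A) (Ω := Ω) (M := M)) →ₗ[k] M}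
    (hDb : ∀ t, Db t = -D (Upsilon t)) :
    IsComodConn d Db ↔ ∀ (f : Ω →ₗ[Aᵐᵒᵖ] M) (a : A), D (rsmulHom a f) = op a • D f + f (d a) := by
  constructor
  · intro h f a
    obtain ⟨t, rfl⟩ := Upsilon_surjective (k := k) f
    obtain ⟨t', ht'⟩ := Upsilon_surjective (k := k) (rsmulHom a (Upsilon t))
    have := h t t' a ((Upsilon_eq_rsmulHom_iff a t t').1 ht')
    rw [hDb, hDb, ht', smul_neg, eq_neg_add_iff_add_eq] at this
    rw [Upsilon_apply, ← this]
    abel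
  · intro h t t' a ht'
    rw [hDb, hDb, (Upsilon_eq_rsmulHom_iff a t t').2 ht', h, ← Upsilon_apply, smul_neg]
    abel

def homConnectionEquivComodConn :
    {D : (Ω →ₗ[Aᵐᵒᵖ] M) → M // IsHomConnection d D} ≃
      {Db : ↥(cotensor (k := k) (A := A) (Ω := Ω) (M := M)) →ₗ[k] M // IsComodConn d Db} where
  toFun D := ⟨-(D.2.1.mk' ∘ₗ (upsilonEquiv k A Ω M).toLinearMap),
    (isComodConn_iff_leibniz d fun _ => rfl).2 D.2.2⟩
  invFun Db := ⟨⇑(-(Db.1 ∘ₗ (upsilonEquiv k A Ω M).symm.toLinearMap)), LinearMap.isLinear _,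
    (isComodConn_iff_leibniz d fun t => by simp).1 Db.2⟩
  left_inv D := Subtype.ext <| funext fun f => by simp
  right_inv Db := Subtype.ext <| LinearMap.ext fun t => by simp

end Correspondence

theorem homConnection_from_comodule_connection_general
    [FiniteDimensional k Ω]
    {ι : Type*} [Fintype ι] (b : Module.Basis ι k Ω)
    (d : A →ₗ[k] Ω)
    (Db : ↥(cotensor (k := k) (A := A) (Ω := Ω) (M := M)) →ₗ[k] M)
    (hDb : IsComodConn d Db) :
    (∀ (f : Ω →ₗ[Aᵐᵒᵖ] M) (a : A)
        (tf tfa : ↥(cotensor (k := k) (A := A) (Ω := Ω) (M := M))),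
        tf.1 = ∑ i, b.coord i ⊗ₜ[k] f (b i) →
        tfa.1 = ∑ i, b.coord i ⊗ₜ[k] (rsmulHom a f) (b i) →
        -(Db tfa) = op a • (-(Db tf)) + f (d a)) ∧
    (∃ e : {D : (Ω →ₗ[Aᵐᵒᵖ] M) → M // IsHomConnection d D} ≃
          {Db' : ↥(cotensor (k := k) (A := A) (Ω := Ω) (M := M)) →ₗ[k] M //
            IsComodConn d Db'},
      ∀ (p : {D : (Ω →ₗ[Aᵐᵒᵖ] M) → M // IsHomConnection d D})
        (t : ↥(cotensor (k := k) (A := A) (Ω := Ω) (M := M))),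
        (e p).1 t = -(p.1 (Upsilon t))) := by
  refine ⟨fun f a tf tfa htf htfa => ?_, homConnectionEquivComodConn d, fun _ _ => rfl⟩
  have upsilonEquiv_symm_eq {g : Ω →ₗ[Aᵐᵒᵖ] M} {t : ↥(cotensor (k := k) (A := A) (Ω := Ω) (M := M))}
      (ht : t.1 = ∑ i, b.coord i ⊗ₜ[k] g (b i)) : (upsilonEquiv k A Ω M).symm g = t :=
    (LinearEquiv.symm_apply_eq _).2 (Upsilon_eq_of_eq_sum_coord_tmul b ht).symm
  have leibniz := (isComodConn_iff_leibniz d (D := fun f => -Db ((upsilonEquiv k A Ω M).symm f))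
    fun t => by simp).1 hDb f a
  rwa [upsilonEquiv_symm_eq htf, upsilonEquiv_symm_eq htfa] at leibniz

/-- For finite-dimensional `A`, `Ω¹`, any comodule connection
`∇̄ : T → M` induces a hom-connection `∇₀ = −∇̄∘Υ⁻¹`; moreover `∇₀ ↦ −∇₀∘Υ` is a
bijection between hom-connections on `M` and comodule connections `T → M`. -/
theorem homConnection_from_comodule_connection
    [FiniteDimensional k A] [FiniteDimensional k Ω]
    {ι : Type*} [Fintype ι] [DecidableEq ι] (b : Module.Basis ι k Ω)
    (d : A →ₗ[k] Ω) (hd : IsFODC d)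
    (Db : ↥(cotensor (k := k) (A := A) (Ω := Ω) (M := M)) →ₗ[k] M)
    (hDb : IsComodConn d Db) :
    (∀ (f : Ω →ₗ[Aᵐᵒᵖ] M) (a : A)
        (tf tfa : ↥(cotensor (k := k) (A := A) (Ω := Ω) (M := M))),
        tf.1 = ∑ i, b.coord i ⊗ₜ[k] f (b i) →
        tfa.1 = ∑ i, b.coord i ⊗ₜ[k] (rsmulHom a f) (b i) →
        -(Db tfa) = op a • (-(Db tf)) + f (d a)) ∧
    (∃ e : {D : (Ω →ₗ[Aᵐᵒᵖ] M) → M // IsHomConnection d D} ≃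
          {Db' : ↥(cotensor (k := k) (A := A) (Ω := Ω) (M := M)) →ₗ[k] M //
            IsComodConn d Db'},
      ∀ (p : {D : (Ω →ₗ[Aᵐᵒᵖ] M) → M // IsHomConnection d D})
        (t : ↥(cotensor (k := k) (A := A) (Ω := Ω) (M := M))),
        (e p).1 t = -(p.1 (Upsilon t))) :=
  homConnection_from_comodule_connection_general b d Db hDb

end
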